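/- If a tree T has an edge-partition E₁, …, E_k such that for each i ∈ [k] every connected component of T − E_i has at most c vertices, then T has a consistent (k+1 : k)-colouring with clustering c. -/

import Mathlib

open SimpleGraph

/-- The strong product of two simple graphs. -/
def strongProd {α β : Type*} (G : SimpleGraph α) (H : SimpleGraph β) :
    SimpleGraph (α × β) where
  Adj x y := x ≠ y ∧ (x.1 = y.1 ∨ G.Adj x.1 y.1) ∧ (x.2 = y.2 ∨ H.Adj x.2 y.2)
  symm.symm x y := by
    rintro ⟨h1, h2, h3⟩
    exact ⟨h1.symm, h2.imp Eq.symm (fun h => G.adj_symm h), h3.imp Eq.symm (fun h => H.adj_symm h)⟩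
  loopless.irrefl x := by simp

/-- The strong product of a family of simple graphs. -/
def strongProdPi {d : ℕ} {V : Fin d → Type*} (G : ∀ i, SimpleGraph (V i)) :
    SimpleGraph (∀ i, V i) where
  Adj x y := x ≠ y ∧ ∀ i, x i = y i ∨ (G i).Adj (x i) (y i)
  symm.symm x y := fun ⟨h1, h2⟩ => ⟨h1.symm, fun i => (h2 i).imp Eq.symm (fun h => (G i).adj_symm h)⟩
  loopless.irrefl x := by simp

/-- Every connected component of the subgraph of `G` induced on `S` has at most `c`
vertices. -/
def ClusterBound {α : Type*} (G : SimpleGraph α) (S : Set α) (c : ℕ) : Prop :=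
  ∀ v : S, ((G.induce S).connectedComponentMk v).supp.ncard ≤ c

/-- `G` has a `k`-colouring with clustering `c`. -/
def HasClusteredColoring {α : Type*} (G : SimpleGraph α) (k c : ℕ) : Prop :=
  ∃ f : α → Fin k, ∀ i : Fin k, ClusterBound G {v | f v = i} c

/-- `f` is a `(p:q)`-colouring: each vertex gets a `q`-element subset of `Fin p`. -/
def IsPQColoring {α : Type*} (p q : ℕ) (f : α → Finset (Fin p)) : Prop :=
  ∀ v, (f v).card = q

/-- `f` is a proper `(p:q)`-colouring of `G`. -/
def IsProperPQColoring {α : Type*} (G : SimpleGraph α) (p q : ℕ)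
    (f : α → Finset (Fin p)) : Prop :=
  IsPQColoring p q f ∧ ∀ ⦃x y⦄, G.Adj x y → Disjoint (f x) (f y)

/-- The set-colouring `f` has clustering `c`: for each colour, each monochromatic
component has at most `c` vertices. -/
def PQClusterBound {α : Type*} (G : SimpleGraph α) {p : ℕ}
    (f : α → Finset (Fin p)) (c : ℕ) : Prop :=
  ∀ i : Fin p, ClusterBound G {v | i ∈ f v} c

/-- `G` has a `(p:q)`-colouring with clustering `c`. -/
def HasPQClusteredColoring {α : Type*} (G : SimpleGraph α) (p q c : ℕ) : Prop :=
  ∃ f : α → Finset (Fin p), IsPQColoring p q f ∧ PQClusterBound G f c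

/-- `ord` is a consistent `(p:q)`-colouring of `G` (each vertex's `q` colours are ordered,
with the `i`-th colour of `x` different from the `j`-th colour of `y` for every edge `xy`
and all distinct `i, j`). -/
def IsConsistentPQColoring {α : Type*} (G : SimpleGraph α) (p q : ℕ)
    (ord : α → Fin q → Fin p) : Prop :=
  (∀ v, Function.Injective (ord v)) ∧
    ∀ ⦃x y⦄, G.Adj x y → ∀ i j : Fin q, i ≠ j → ord x i ≠ ord y j

/-- The colour set of a vertex in an ordered colouring. -/
def ordColors {α : Type*} {p q : ℕ} (ord : α → Fin q → Fin p) (v : α) : Finset (Fin p) :=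
  Finset.image (ord v) Finset.univ

/-- `G` has a consistent `(p:q)`-colouring with clustering `c`. -/
def HasConsistentClusteredColoring {α : Type*} (G : SimpleGraph α) (p q c : ℕ) : Prop :=
  ∃ ord : α → Fin q → Fin p, IsConsistentPQColoring G p q ord ∧
    PQClusterBound G (ordColors ord) c

/-- The fractional chromatic number of `G`: the infimum of `p/q` over proper
`(p:q)`-colourings of `G`. -/
noncomputable def fracChrom {α : Type*} (G : SimpleGraph α) : ℝ :=
  sInf {t : ℝ | ∃ p q : ℕ, 0 < q ∧
    (∃ f : α → Finset (Fin p), IsProperPQColoring G p q f) ∧ t = (p : ℝ) / q}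

/-- The independence number of `G`. -/
noncomputable def indepNum {α : Type*} (G : SimpleGraph α) : ℕ :=
  sSup {n | ∃ s : Finset α, (∀ x ∈ s, ∀ y ∈ s, ¬ G.Adj x y) ∧ s.card = n}


/-!
Record the ordered colours of a vertex `v` as a permutation `σ v` of `Fin (k + 1)`: its
colours are `σ v 0, …, σ v (k - 1)` and `σ v k` is the colour it misses. Rooting the tree, an
edge of `E i` is crossed by exchanging the `i`-th colour with the missing one, i.e.
`σ y = σ x * swap i k`. Then two adjacent vertices sharing a colour hold it in the same
position `j`, and the edge between them is not in `E j`. So a monochromatic component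
keeps its colour in one position `j` and lies inside a component of `T - E j`.
-/

open Equiv

theorem Fin.eq_and_ne_of_swap_castSucc_last_apply_eq {k : ℕ} {i j l : Fin k}
    (h : swap l.castSucc (Fin.last k) j.castSucc = i.castSucc) : j = i ∧ j ≠ l := by
  obtain rfl | hjl := eq_or_ne j l
  · rw [swap_apply_left] at h
    exact absurd h.symm (castSucc_ne_last i)
  · rw [swap_apply_of_ne_of_ne ((castSucc_injective k).ne hjl) (castSucc_ne_last j)] at h
    exact ⟨castSucc_injective k h, hjl⟩

theorem mem_ordColors {α : Type*} {p q : ℕ} {ord : α → Fin q → Fin p} {v : α}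
    {a : Fin p} : a ∈ ordColors ord v ↔ ∃ i, ord v i = a := by
  simp [ordColors]

namespace SimpleGraph

variable {α : Type*} {G : SimpleGraph α}

theorem IsTree.exists_potential {M : Type*} [Group M] (hT : G.IsTree) (τ : G.Dart → M)
    (hτ : ∀ d, τ d.symm = (τ d)⁻¹) :
    ∃ σ : α → M, ∀ d : G.Dart, σ d.snd = σ d.fst * τ d := by
  obtain ⟨r⟩ := hT.connected.nonempty
  -- `σ v` is the product of `τ` along the path from `r` to `v`; across an edge, one of the two
  -- root paths extends the other.
  choose P hP using fun v => (hT.existsUnique_path r v).exists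
  refine ⟨fun v => ((P v).darts.map τ).prod, fun ⟨(x, y), hxy⟩ => ?_⟩
  dsimp only
  by_cases hy : y ∈ (P x).support
  · rw [hT.isAcyclic.path_concat (hP y) (hP x) hxy.symm hy]
    simp [show τ ⟨(y, x), hxy.symm⟩ = (τ ⟨(x, y), hxy⟩)⁻¹ from hτ ⟨(x, y), hxy⟩]
  · have hx := hT.isAcyclic.mem_support_of_ne_mem_support_of_adj_of_isPath (hP y) (hP x)
      hxy.symm hy
    rw [hT.isAcyclic.path_concat (hP x) (hP y) hxy hx]
    simp

end SimpleGraph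

section permColoring

variable {α : Type*} {G : SimpleGraph α}

theorem ClusterBound.of_forall_reachable [Finite α] {ι : Type*} {H : ι → SimpleGraph α}
    {S : Set α} {c : ℕ} (hH : ∀ i, ClusterBound (H i) Set.univ c)
    (h : ∀ v : S, ∃ i, ∀ w : S, (G.induce S).Reachable v w → (H i).Reachable v w) :
    ClusterBound G S c := by
  intro v
  obtain ⟨i, hi⟩ := h v
  refine le_trans ?_ (hH i ⟨v, trivial⟩)
  refine Set.ncard_le_ncard_of_injOn (fun w => ⟨w, trivial⟩) (fun w hw => ?_)
    (fun _ _ _ _ h => by simpa [Subtype.ext_iff] using h) (Set.toFinite _)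
  rw [ConnectedComponent.mem_supp_iff, ConnectedComponent.eq] at hw ⊢
  exact (Iso.reachable_iff (φ := (induceUnivIso (H i)).symm)).2 (hi w hw.symm).symm

variable {k : ℕ} {σ : α → Perm (Fin (k + 1))} {ℓ : G.Dart → Fin k}

def permColoring (σ : α → Perm (Fin (k + 1))) (v : α) (i : Fin k) : Fin (k + 1) :=
  σ v i.castSucc

theorem eq_and_ne_of_permColoring_snd_eq
    (hσ : ∀ d : G.Dart, σ d.snd = σ d.fst * swap (ℓ d).castSucc (Fin.last k))
    (d : G.Dart) {i j : Fin k} (h : permColoring σ d.snd j = permColoring σ d.fst i) :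
    j = i ∧ j ≠ ℓ d := by
  rw [permColoring, permColoring, hσ d, Perm.mul_apply] at h
  exact Fin.eq_and_ne_of_swap_castSucc_last_apply_eq ((σ d.fst).injective h)

theorem isConsistentPQColoring_permColoring
    (hσ : ∀ d : G.Dart, σ d.snd = σ d.fst * swap (ℓ d).castSucc (Fin.last k)) :
    IsConsistentPQColoring G (k + 1) k (permColoring σ) :=
  ⟨fun v => (σ v).injective.comp (Fin.castSucc_injective k),
    fun x y hxy _ _ hij h =>
      hij (eq_and_ne_of_permColoring_snd_eq hσ ⟨(x, y), hxy⟩ h.symm).1.symm⟩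

theorem reachable_of_reachable_induce_permColoring
    (hσ : ∀ d : G.Dart, σ d.snd = σ d.fst * swap (ℓ d).castSucc (Fin.last k))
    {H : SimpleGraph α} {i : Fin k} (hadj : ∀ d : G.Dart, ℓ d ≠ i → H.Adj d.fst d.snd)
    {a : Fin (k + 1)} {v w : {x | a ∈ ordColors (permColoring σ) x}}
    (hvw : (G.induce _).Reachable v w) (hv : permColoring σ v i = a) : H.Reachable v w := by
  obtain ⟨p⟩ := hvw
  suffices ∀ x y, (G.induce _).Walk x y → permColoring σ x i = a → H.Reachable x y from
    this v w p hv
  intro x y p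
  induction p with
  | nil => exact fun _ => Reachable.refl _
  | @cons x u y hxu _ ih =>
    intro hx
    obtain ⟨j, hj⟩ := mem_ordColors.1 u.2
    obtain ⟨rfl, hℓ⟩ :=
      eq_and_ne_of_permColoring_snd_eq hσ ⟨(x, u), hxu⟩ (hj.trans hx.symm)
    exact (hadj _ hℓ.symm).reachable.trans (ih hj)

theorem pqClusterBound_permColoring [Finite α]
    (hσ : ∀ d : G.Dart, σ d.snd = σ d.fst * swap (ℓ d).castSucc (Fin.last k))
    {H : Fin k → SimpleGraph α} {c : ℕ} (hH : ∀ i, ClusterBound (H i) Set.univ c)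
    (hadj : ∀ (d : G.Dart) i, ℓ d ≠ i → (H i).Adj d.fst d.snd) :
    PQClusterBound G (ordColors (permColoring σ)) c := fun _ =>
  ClusterBound.of_forall_reachable hH fun v =>
    let ⟨i, hi⟩ := mem_ordColors.1 v.2
    ⟨i, fun _ hvw => reachable_of_reachable_induce_permColoring hσ (hadj · i) hvw hi⟩

end permColoring

theorem stmt11 {α : Type*} [Fintype α] (T : SimpleGraph α) (hT : T.IsTree)
    (k c : ℕ) (E : Fin k → Set (Sym2 α))
    (hcover : (⋃ i, E i) = T.edgeSet)
    (hdisj : ∀ i j : Fin k, i ≠ j → Disjoint (E i) (E j))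
    (hcomp : ∀ i : Fin k, ClusterBound (T.deleteEdges (E i)) Set.univ c) :
    HasConsistentClusteredColoring T (k + 1) k c := by
  choose ℓ hℓ using fun e : T.edgeSet => Set.mem_iUnion.1 (hcover.ge e.2)
  let label (d : T.Dart) : Fin k := ℓ ⟨d.edge, d.edge_mem⟩
  obtain ⟨σ, hσ⟩ := hT.exists_potential (fun d => swap (label d).castSucc (Fin.last k))
    fun d => by simp [label, Dart.edge_symm]
  refine ⟨permColoring σ, isConsistentPQColoring_permColoring hσ,
    pqClusterBound_permColoring hσ hcomp fun d i hi => ?_⟩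
  exact deleteEdges_adj.2
    ⟨d.adj, Set.disjoint_left.1 (hdisj _ _ hi) (hℓ ⟨d.edge, d.edge_mem⟩)⟩
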